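/- For all z, w in the open unit ball of ℂⁿ with w ≠ 0 (so that the involutive automorphism Φ_z is defined), one has |z - Φ_z(w)| ≥ |w|(1 - |z|²)/|1 - ⟨z,w⟩|, where ⟨·,·⟩ is the Hermitian inner product on ℂⁿ. -/

import Mathlib

open MeasureTheory
open scoped ENNReal

noncomputable section

/-- `ℂⁿ` with the Euclidean (Hermitian) norm. -/
abbrev Cn (n : ℕ) := EuclideanSpace ℂ (Fin n)

/-- Lebesgue volume measure on `ℂⁿ`. -/
instance (n : ℕ) : MeasureSpace (Cn n) := by
  exact ⟨Measure.map (WithLp.toLp 2) (volume : Measure (Fin n → ℂ))⟩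

/-- The open unit ball `𝔹` of `ℂⁿ`. -/
def ball1 (n : ℕ) : Set (Cn n) := Metric.ball 0 1

/-- `⟨z,w⟩`: the Hermitian inner product in the paper's convention
(linear in `z`, conjugate-linear in `w`); in Mathlib's convention this is `inner w z`. -/
def ip {n : ℕ} (z w : Cn n) : ℂ := inner ℂ w z

/-- The numerator `a - P_a z - s_a Q_a z` of the Möbius automorphism `Φ_a`, where
`P_a z = (⟨z,a⟩/|a|²)a`, `Q_a = I - P_a` and `s_a = √(1-|a|²)`. -/
def numer {n : ℕ} (a z : Cn n) : Cn n :=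
  a - ((ip z a) / ((‖a‖ ^ 2 : ℝ) : ℂ)) • a
    - ((Real.sqrt (1 - ‖a‖ ^ 2) : ℝ) : ℂ) • (z - ((ip z a) / ((‖a‖ ^ 2 : ℝ) : ℂ)) • a)

/-- The involutive Möbius automorphism `Φ_a(z) = (a - P_a z - s_a Q_a z)/(1 - ⟨z,a⟩)`. -/
def phi {n : ℕ} (a z : Cn n) : Cn n := (1 - ip z a)⁻¹ • numer a z

/-!
With `P` the orthogonal projection onto `ℂ a` and `s = √(1 - |a|²)`, the identity
`⟨z,a⟩ a = |a|² P z` gives `(1 - ⟨z,a⟩)(a - Φ_a z) = s² P z + s (z - P z)`. Since `P z ⟂ z - P z`,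
Pythagoras and `|a|² |P z|² = |⟨z,a⟩|²` yield
`|1 - ⟨z,a⟩|² |a - Φ_a z|² = (1 - |a|²)(|z|² - |⟨z,a⟩|²)`,
and Cauchy–Schwarz bounds the right-hand side below by `(1 - |a|²)² |z|²`.
-/

open scoped InnerProductSpace

section Projection

variable {E : Type*} [NormedAddCommGroup E] [InnerProductSpace ℂ E]

theorem norm_smul_starProjection_add_smul_sq (K : Submodule ℂ E) [K.HasOrthogonalProjection]
    (c d : ℂ) (x : E) :
    ‖c • K.starProjection x + d • (x - K.starProjection x)‖ ^ 2 =
      ‖c‖ ^ 2 * ‖K.starProjection x‖ ^ 2 + ‖d‖ ^ 2 * ‖x - K.starProjection x‖ ^ 2 := by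
  have horth : ⟪c • K.starProjection x, d • (x - K.starProjection x)⟫_ℂ = 0 := by
    rw [inner_smul_left, inner_smul_right, inner_eq_zero_symm.mp
      (K.starProjection_inner_eq_zero x _ (K.starProjection_apply_mem x)), mul_zero, mul_zero]
  rw [sq, norm_add_sq_eq_norm_sq_add_norm_sq_of_inner_eq_zero _ _ horth, norm_smul, norm_smul]
  ring

theorem norm_sq_eq_norm_starProjection_sq_add (K : Submodule ℂ E) [K.HasOrthogonalProjection]
    (x : E) : ‖x‖ ^ 2 = ‖K.starProjection x‖ ^ 2 + ‖x - K.starProjection x‖ ^ 2 := by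
  simpa using norm_smul_starProjection_add_smul_sq K 1 1 x

theorem inner_smul_eq_norm_sq_smul_starProjection_singleton (a x : E) :
    ⟪a, x⟫_ℂ • a = ((‖a‖ ^ 2 : ℝ) : ℂ) • (ℂ ∙ a).starProjection x := by
  rcases eq_or_ne a 0 with rfl | ha
  · simp
  rw [Submodule.starProjection_singleton, smul_smul]
  exact congrArg (· • a) (mul_div_cancel₀ _ (by simp [ha])).symm

theorem norm_sq_mul_norm_starProjection_singleton_sq (a x : E) :
    ‖a‖ ^ 2 * ‖(ℂ ∙ a).starProjection x‖ ^ 2 = ‖⟪a, x⟫_ℂ‖ ^ 2 := by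
  rcases eq_or_ne a 0 with rfl | ha
  · simp
  have hsq := congrArg (‖·‖ ^ 2) (inner_smul_eq_norm_sq_smul_starProjection_singleton a x)
  simp only [norm_smul, Complex.norm_real, norm_pow, norm_norm] at hsq
  refine mul_left_cancel₀ (pow_ne_zero 2 (norm_ne_zero_iff.mpr ha)) ?_
  linear_combination hsq.symm

end Projection

variable {n : ℕ}

theorem numer_eq_starProjection (a z : Cn n) :
    numer a z = a - (ℂ ∙ a).starProjection z
      - ((√(1 - ‖a‖ ^ 2) : ℝ) : ℂ) • (z - (ℂ ∙ a).starProjection z) := by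
  rw [Submodule.starProjection_singleton]
  rfl

theorem one_sub_ip_smul_sub_phi (a z : Cn n) (h : ip z a ≠ 1) :
    (1 - ip z a) • (a - phi a z) = ((1 - ‖a‖ ^ 2 : ℝ) : ℂ) • (ℂ ∙ a).starProjection z
      + ((√(1 - ‖a‖ ^ 2) : ℝ) : ℂ) • (z - (ℂ ∙ a).starProjection z) := by
  have hproj := inner_smul_eq_norm_sq_smul_starProjection_singleton a z
  rw [phi, smul_sub, smul_inv_smul₀ (sub_ne_zero.mpr h.symm), numer_eq_starProjection, sub_smul,
    one_smul, show (ip z a) • a = ⟪a, z⟫_ℂ • a from rfl, hproj]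
  push_cast
  module

theorem norm_one_sub_ip_sq_mul_norm_sub_phi_sq (a z : Cn n) (ha : ‖a‖ ≤ 1) (h : ip z a ≠ 1) :
    ‖1 - ip z a‖ ^ 2 * ‖a - phi a z‖ ^ 2 = (1 - ‖a‖ ^ 2) * (‖z‖ ^ 2 - ‖ip z a‖ ^ 2) := by
  have hs : √(1 - ‖a‖ ^ 2) ^ 2 = 1 - ‖a‖ ^ 2 := Real.sq_sqrt (by nlinarith [norm_nonneg a])
  rw [← mul_pow, ← norm_smul, one_sub_ip_smul_sub_phi a z h, norm_smul_starProjection_add_smul_sq,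
    Complex.norm_real, Complex.norm_real, Real.norm_eq_abs, Real.norm_eq_abs, sq_abs, sq_abs, hs,
    norm_sq_eq_norm_starProjection_sq_add (ℂ ∙ a) z, show ip z a = ⟪a, z⟫_ℂ from rfl,
    ← norm_sq_mul_norm_starProjection_singleton_sq a z]
  ring

theorem one_sub_norm_sq_mul_norm_le (a z : Cn n) (ha : ‖a‖ ≤ 1) (h : ip z a ≠ 1) :
    (1 - ‖a‖ ^ 2) * ‖z‖ ≤ ‖1 - ip z a‖ * ‖a - phi a z‖ := by
  have hCS : ‖ip z a‖ ≤ ‖a‖ * ‖z‖ := norm_inner_le_norm a z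
  have h1a : 0 ≤ 1 - ‖a‖ ^ 2 := by nlinarith [norm_nonneg a]
  refine (pow_le_pow_iff_left₀ (by positivity) (by positivity) two_ne_zero).mp ?_
  rw [mul_pow, mul_pow, norm_one_sub_ip_sq_mul_norm_sub_phi_sq a z ha h]
  have : ‖ip z a‖ ^ 2 ≤ ‖a‖ ^ 2 * ‖z‖ ^ 2 := by
    rw [← mul_pow]; exact pow_le_pow_left₀ (norm_nonneg _) hCS 2
  nlinarith

theorem norm_one_sub_ip_comm (z w : Cn n) : ‖1 - ip z w‖ = ‖1 - ip w z‖ := by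
  rw [← RCLike.norm_conj, map_sub, map_one, ip, ip, inner_conj_symm]

theorem ip_ne_one {z w : Cn n} (hz : z ∈ ball1 n) (hw : w ∈ ball1 n) : ip z w ≠ 1 := by
  rw [ball1, mem_ball_zero_iff] at hz hw
  intro h
  have : ‖ip z w‖ < 1 := (norm_inner_le_norm w z).trans_lt
    (by nlinarith [norm_nonneg z, norm_nonneg w])
  simp [h] at this

theorem stmt0_general (n : ℕ) (z w : Cn n) (hz : z ∈ ball1 n) (hw : w ∈ ball1 n) :
    ‖z - phi z w‖ ≥ ‖w‖ * (1 - ‖z‖ ^ 2) / ‖1 - ip z w‖ := by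
  have hz1 : ‖z‖ ≤ 1 := (mem_ball_zero_iff.mp hz).le
  have hne : ip w z ≠ 1 := ip_ne_one hw hz
  rw [norm_one_sub_ip_comm, ge_iff_le, div_le_iff₀ (norm_pos_iff.mpr (sub_ne_zero.mpr hne.symm))]
  linarith [one_sub_norm_sq_mul_norm_le z w hz1 hne]

theorem stmt0 (n : ℕ) (z w : Cn n) (hz : z ∈ ball1 n) (hw : w ∈ ball1 n) (hw0 : w ≠ 0) :
    ‖z - phi z w‖ ≥ ‖w‖ * (1 - ‖z‖ ^ 2) / ‖1 - ip z w‖ :=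
  stmt0_general n z w hz hw
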